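/- Let (V, ⟨·,·⟩) be a real inner product space and W : V → V a self-adjoint trace-free linear operator on a 3-dimensional space V. Then for every ψ ∈ V, |⟨W(ψ), ψ⟩| ≤ √(2/3)·‖W‖·‖ψ‖², where ‖W‖ is the Hilbert–Schmidt (Frobenius) norm of W. -/
import Mathlib

open RealInnerProductSpace

section Aux

variable {V : Type*} [NormedAddCommGroup V] [InnerProductSpace ℝ V]
    [FiniteDimensional ℝ V]

open Finset in
/-- Trace via an orthonormal basis. -/
lemma trace_eq_sum_inner' {ι : Type*} [Fintype ι] [DecidableEq ι]
    (b : OrthonormalBasis ι ℝ V) (A : V →ₗ[ℝ] V) :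
    LinearMap.trace ℝ V A = ∑ i, ⟪A (b i), b i⟫ := by
  rw [LinearMap.trace_eq_matrix_trace ℝ b.toBasis A, Matrix.trace]
  congr 1
  ext i
  rw [Matrix.diag_apply, LinearMap.toMatrix_apply, b.coe_toBasis,
    b.coe_toBasis_repr_apply, b.repr_apply_apply, real_inner_comm]

/-- Cauchy–Schwarz for the trace (Frobenius) inner product of symmetric operators. -/
lemma trace_comp_cauchy_schwarz (A C : V →ₗ[ℝ] V)
    (hA : ∀ x y : V, ⟪A x, y⟫ = ⟪x, A y⟫) (hC : ∀ x y : V, ⟪C x, y⟫ = ⟪x, C y⟫) :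
    |LinearMap.trace ℝ V (A ∘ₗ C)| ≤
      Real.sqrt (LinearMap.trace ℝ V (A ∘ₗ A)) *
        Real.sqrt (LinearMap.trace ℝ V (C ∘ₗ C)) := by
  classical
  let b := stdOrthonormalBasis ℝ V
  have hAC : LinearMap.trace ℝ V (A ∘ₗ C) = ∑ i, ⟪C (b i), A (b i)⟫ := by
    rw [trace_eq_sum_inner' b]
    refine Finset.sum_congr rfl fun i _ => ?_
    rw [LinearMap.comp_apply, hA]
  have hAA : LinearMap.trace ℝ V (A ∘ₗ A) = ∑ i, ‖A (b i)‖ ^ 2 := by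
    rw [trace_eq_sum_inner' b]
    refine Finset.sum_congr rfl fun i _ => ?_
    rw [LinearMap.comp_apply, hA, real_inner_self_eq_norm_sq]
  have hCC : LinearMap.trace ℝ V (C ∘ₗ C) = ∑ i, ‖C (b i)‖ ^ 2 := by
    rw [trace_eq_sum_inner' b]
    refine Finset.sum_congr rfl fun i _ => ?_
    rw [LinearMap.comp_apply, hC, real_inner_self_eq_norm_sq]
  rw [hAC, hAA, hCC]
  calc |∑ i, ⟪C (b i), A (b i)⟫| ≤ ∑ i, |⟪C (b i), A (b i)⟫| :=
        Finset.abs_sum_le_sum_abs _ _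
    _ ≤ ∑ i, ‖A (b i)‖ * ‖C (b i)‖ := by
        refine Finset.sum_le_sum fun i _ => ?_
        rw [mul_comm]
        exact abs_real_inner_le_norm _ _
    _ ≤ Real.sqrt (∑ i, ‖A (b i)‖ ^ 2) * Real.sqrt (∑ i, ‖C (b i)‖ ^ 2) := by
        rw [← Real.sqrt_mul (by positivity)]
        calc ∑ i, ‖A (b i)‖ * ‖C (b i)‖
            = Real.sqrt ((∑ i, ‖A (b i)‖ * ‖C (b i)‖) ^ 2) :=
              (Real.sqrt_sq (by positivity)).symm
          _ ≤ _ := Real.sqrt_le_sqrt (Finset.sum_mul_sq_le_sq_mul_sq _ _ _)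

end Aux

/-- for a self-adjoint trace-free operator `W` on a
3-dimensional real inner product space, every `ψ` satisfies
`|⟨W ψ, ψ⟩| ≤ √(2/3)·‖W‖·‖ψ‖²`, where `‖W‖` is the Frobenius norm
`√(tr W²)`. -/
theorem stmt_6 (V : Type*) [NormedAddCommGroup V] [InnerProductSpace ℝ V]
    [FiniteDimensional ℝ V] (hdim : Module.finrank ℝ V = 3)
    (W : V →ₗ[ℝ] V)
    (hsa : ∀ x y : V, ⟪W x, y⟫ = ⟪x, W y⟫)
    (htf : LinearMap.trace ℝ V W = 0) (ψ : V) :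
    |⟪W ψ, ψ⟫| ≤
      Real.sqrt (2/3) * Real.sqrt (LinearMap.trace ℝ V (W ∘ₗ W)) * ‖ψ‖^2 := by
  classical
  -- the rank-one operator `B x = ⟪ψ, x⟫ • ψ` minus `(‖ψ‖²/3) • id`
  set B : V →ₗ[ℝ] V := (innerₛₗ ℝ ψ).smulRight ψ with hBdef
  have hBapp : ∀ x, B x = ⟪ψ, x⟫ • ψ := fun x => rfl
  set c : ℝ := ‖ψ‖ ^ 2 / 3 with hc
  set B' : V →ₗ[ℝ] V := B - c • LinearMap.id with hB'def
  have hB'app : ∀ x, B' x = ⟪ψ, x⟫ • ψ - c • x := fun x => rfl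
  -- B' is symmetric
  have hB'sym : ∀ x y : V, ⟪B' x, y⟫ = ⟪x, B' y⟫ := by
    intro x y
    simp only [hB'app, inner_sub_left, inner_sub_right, real_inner_smul_left,
      real_inner_smul_right]
    rw [real_inner_comm x ψ]
    ring
  have b := stdOrthonormalBasis ℝ V
  -- trace (W ∘ B') = ⟪W ψ, ψ⟫
  have h1 : LinearMap.trace ℝ V (W ∘ₗ B') = ⟪W ψ, ψ⟫ := by
    have hcomp : W ∘ₗ B' = W ∘ₗ B - c • W := by
      show W * (B - c • 1) = W * B - c • W
      rw [mul_sub, mul_smul_comm, mul_one]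
    rw [hcomp, map_sub, map_smul, htf, smul_zero, sub_zero,
      trace_eq_sum_inner' (stdOrthonormalBasis ℝ V)]
    have : ∀ i, ⟪(W ∘ₗ B) (stdOrthonormalBasis ℝ V i), stdOrthonormalBasis ℝ V i⟫
        = ⟪W ψ, stdOrthonormalBasis ℝ V i⟫ * ⟪stdOrthonormalBasis ℝ V i, ψ⟫ := by
      intro i
      rw [LinearMap.comp_apply, hBapp, map_smul, inner_smul_left]
      simp [real_inner_comm]
      ring
    rw [Finset.sum_congr rfl fun i _ => this i,
      (stdOrthonormalBasis ℝ V).sum_inner_mul_inner]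
  -- trace (B' ∘ B') = (2/3) * ‖ψ‖⁴
  have h2 : LinearMap.trace ℝ V (B' ∘ₗ B') = 2/3 * ‖ψ‖ ^ 4 := by
    have hBB : B ∘ₗ B = (‖ψ‖ ^ 2) • B := by
      ext x
      simp [hBapp, inner_smul_right, real_inner_self_eq_norm_sq, smul_smul, mul_comm]
    have hBBm : B * B = (‖ψ‖ ^ 2) • B := hBB
    have hcomp : B' ∘ₗ B' = (‖ψ‖ ^ 2) • B - (2 * c) • B + (c ^ 2) • LinearMap.id := by
      show (B - c • 1) * (B - c • 1) = (‖ψ‖ ^ 2) • B - (2 * c) • B + (c ^ 2) • 1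
      rw [mul_sub, sub_mul, sub_mul, hBBm, smul_mul_assoc, one_mul, mul_smul_comm, mul_one,
        smul_mul_smul_comm, one_mul]
      module
    have hTrB : LinearMap.trace ℝ V B = ‖ψ‖ ^ 2 := by
      rw [trace_eq_sum_inner' (stdOrthonormalBasis ℝ V)]
      have : ∀ i, ⟪B (stdOrthonormalBasis ℝ V i), stdOrthonormalBasis ℝ V i⟫
          = ⟪ψ, stdOrthonormalBasis ℝ V i⟫ * ⟪stdOrthonormalBasis ℝ V i, ψ⟫ := by
        intro i
        rw [hBapp, inner_smul_left]
        simp [real_inner_comm]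
      rw [Finset.sum_congr rfl fun i _ => this i,
        (stdOrthonormalBasis ℝ V).sum_inner_mul_inner, real_inner_self_eq_norm_sq]
    rw [hcomp, map_add, map_sub, map_smul, map_smul, map_smul, hTrB,
      LinearMap.trace_id, hdim, hc]
    simp only [smul_eq_mul]
    push_cast
    ring
  -- Cauchy–Schwarz for the trace inner product
  have hCS := trace_comp_cauchy_schwarz W B' hsa hB'sym
  rw [h1, h2] at hCS
  calc |⟪W ψ, ψ⟫| ≤ Real.sqrt (LinearMap.trace ℝ V (W ∘ₗ W)) *
        Real.sqrt (2/3 * ‖ψ‖ ^ 4) := hCS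
    _ = Real.sqrt (2/3) * Real.sqrt (LinearMap.trace ℝ V (W ∘ₗ W)) * ‖ψ‖ ^ 2 := by
        rw [Real.sqrt_mul (by norm_num)]
        have : Real.sqrt (‖ψ‖ ^ 4) = ‖ψ‖ ^ 2 := by
          rw [show ‖ψ‖ ^ 4 = (‖ψ‖ ^ 2) ^ 2 by ring, Real.sqrt_sq (by positivity)]
        rw [this]
        ring
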